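/- arXiv:1104.2100 — 2 statements merged into one kernel-verified Lean document; each statement's English description precedes it below -/
import Mathlib

section
/- Let K be a commutative ring, R a commutative K-algebra, and E a faithful R-module equipped with an anchored skew bracket ([·,·], ρ). Suppose the Jacobiator satisfies axiom (A2), i.e. J(e₁, e₂, e₃) = ∂(Ω(e₁, e₂, e₃)) for an R-linear map ∂ : F → E from an R-module F and a map Ω : E × E × E → F which is R-linear in each argument (in particular J is R-linear in its last argument). Then the anchor satisfies axiom (A0): ρ([e₁, e₂]) = [ρ(e₁), ρ(e₂)] as derivations of R, for all e₁, e₂ ∈ E. -/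
/-- The Jacobiator of a bracket: `J(e₁,e₂,e₃) = [[e₁,e₂],e₃] + [[e₂,e₃],e₁] + [[e₃,e₁],e₂]`. -/
def jacobiator {K E : Type*} [CommRing K] [AddCommGroup E] [Module K E]
    (brk : E →ₗ[K] E →ₗ[K] E) (e₁ e₂ e₃ : E) : E :=
  brk (brk e₁ e₂) e₃ + brk (brk e₂ e₃) e₁ + brk (brk e₃ e₁) e₂

/-- For an anchored skew bracket `([·,·], ρ)` on a faithful `R`-module `E`,
if the Jacobiator satisfies axiom (A2), i.e. `J(e₁,e₂,e₃) = ∂(Ω(e₁,e₂,e₃))` with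
`∂ : F → E` an `R`-linear map and `Ω` an `R`-trilinear map into an `R`-module `F`,
then the anchor satisfies (A0): `ρ([e₁,e₂]) = [ρ(e₁), ρ(e₂)]` as derivations of `R`. -/
theorem anchor_bracket_hom_of_A2
    {K R E F : Type*} [CommRing K] [CommRing R] [Algebra K R]
    [AddCommGroup E] [Module K E] [Module R E] [IsScalarTower K R E]
    [AddCommGroup F] [Module R F]
    (faithful : ∀ f : R, (∀ e : E, f • e = 0) → f = 0)
    (brk : E →ₗ[K] E →ₗ[K] E)
    (alt : ∀ e : E, brk e e = 0)
    (ρ : E →ₗ[R] Derivation K R R)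
    (leibniz : ∀ (f : R) (e₁ e₂ : E),
      brk e₁ (f • e₂) = f • brk e₁ e₂ + (ρ e₁ f) • e₂)
    (bd : F →ₗ[R] E)
    (Ω : E →ₗ[R] E →ₗ[R] E →ₗ[R] F)
    (A2 : ∀ e₁ e₂ e₃ : E, jacobiator brk e₁ e₂ e₃ = bd (Ω e₁ e₂ e₃)) :
    ∀ e₁ e₂ : E, ρ (brk e₁ e₂) = ⁅ρ e₁, ρ e₂⁆ := by
  have skew : ∀ a b : E, brk a b = - brk b a := by
    intro a b
    have h := alt (a + b)
    simp only [map_add, LinearMap.add_apply, alt, zero_add, add_zero] at h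
    rw [add_comm] at h
    exact eq_neg_of_add_eq_zero_left h
  have aux : ∀ (f : R) (a b : E), brk (f • a) b = f • brk a b - (ρ b) f • a := by
    intro f a b
    rw [skew (f • a) b, leibniz, skew a b]
    module
  intro e₁ e₂
  ext f
  have key : ∀ e₃ : E,
      ((ρ (brk e₁ e₂)) f - ((ρ e₁) ((ρ e₂) f) - (ρ e₂) ((ρ e₁) f))) • e₃ = 0 := by
    intro e₃
    have h1 : jacobiator brk e₁ e₂ (f • e₃) = f • jacobiator brk e₁ e₂ e₃ +
        ((ρ (brk e₁ e₂)) f - (ρ e₁) ((ρ e₂) f) + (ρ e₂) ((ρ e₁) f)) • e₃ := by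
      simp only [jacobiator, leibniz, aux, map_add, map_sub, LinearMap.add_apply,
        LinearMap.sub_apply, smul_add, smul_sub]
      rw [skew e₃ e₂]
      module
    have h2 : jacobiator brk e₁ e₂ (f • e₃) = f • jacobiator brk e₁ e₂ e₃ := by
      rw [A2, A2, map_smul, map_smul]
    rw [h2, left_eq_add] at h1
    rw [show (ρ (brk e₁ e₂)) f - ((ρ e₁) ((ρ e₂) f) - (ρ e₂) ((ρ e₁) f))
        = (ρ (brk e₁ e₂)) f - (ρ e₁) ((ρ e₂) f) + (ρ e₂) ((ρ e₁) f) by ring]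
    exact h1
  have hf := faithful _ key
  rw [Derivation.commutator_apply]
  exact sub_eq_zero.mp hf
end

section
/- Let K be a commutative ring, R a commutative K-algebra, and E a faithful R-module equipped with an anchored skew bracket ([·,·], ρ) whose bracket satisfies the Jacobi identity, i.e. the Jacobiator vanishes identically (so that (E, [·,·], ρ) is an algebraic model of a Lie algebroid). Then the anchor is a homomorphism of brackets: ρ([e₁, e₂]) = [ρ(e₁), ρ(e₂)] as derivations of R, for all e₁, e₂ ∈ E; that is, axiom (A0) of a Lie algebroid follows from axiom (A1) and the Jacobi identity. -/
/-!
By the Leibniz rule and skew-symmetry, the Jacobiator fails to be `R`-linear in its last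
argument by exactly the defect of the anchor:
`J(e₁, e₂, f • e₃) = f • J(e₁, e₂, e₃) + (ρ[e₁,e₂] f - [ρ e₁, ρ e₂] f) • e₃`.
If the Jacobiator vanishes, the scalar `ρ[e₁,e₂] f - [ρ e₁, ρ e₂] f` therefore annihilates
every `e₃`, and faithfulness forces it to be zero.
-/

section AnchoredBracket

variable {K R E : Type*} [CommRing K] [CommRing R] [Algebra K R]
  [AddCommGroup E] [Module K E] [Module R E]
  {brk : E →ₗ[K] E →ₗ[K] E} {ρ : E →ₗ[R] Derivation K R R}

theorem bracket_smul_left (alt : brk.IsAlt)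
    (leibniz : ∀ (f : R) (e₁ e₂ : E), brk e₁ (f • e₂) = f • brk e₁ e₂ + (ρ e₁ f) • e₂)
    (f : R) (e₁ e₂ : E) :
    brk (f • e₁) e₂ = f • brk e₁ e₂ - (ρ e₂ f) • e₁ := by
  rw [← alt.neg e₂, leibniz, ← alt.neg e₁ e₂]
  module

theorem jacobiator_smul_right (alt : brk.IsAlt)
    (leibniz : ∀ (f : R) (e₁ e₂ : E), brk e₁ (f • e₂) = f • brk e₁ e₂ + (ρ e₁ f) • e₂)
    (f : R) (e₁ e₂ e₃ : E) :
    jacobiator brk e₁ e₂ (f • e₃) =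
      f • jacobiator brk e₁ e₂ e₃ + (ρ (brk e₁ e₂) f - ⁅ρ e₁, ρ e₂⁆ f) • e₃ := by
  simp only [jacobiator, leibniz, bracket_smul_left alt leibniz, map_add, map_sub,
    LinearMap.add_apply, LinearMap.sub_apply, Derivation.commutator_apply]
  rw [← alt.neg e₂ e₃, ← alt.neg e₁ e₃]
  module

end AnchoredBracket

theorem anchor_bracket_hom_of_jacobi_general
    {K R E : Type*} [CommRing K] [CommRing R] [Algebra K R]
    [AddCommGroup E] [Module K E] [Module R E]
    (faithful : ∀ f : R, (∀ e : E, f • e = 0) → f = 0)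
    (brk : E →ₗ[K] E →ₗ[K] E)
    (alt : ∀ e : E, brk e e = 0)
    (ρ : E →ₗ[R] Derivation K R R)
    (leibniz : ∀ (f : R) (e₁ e₂ : E),
      brk e₁ (f • e₂) = f • brk e₁ e₂ + (ρ e₁ f) • e₂)
    (jacobi : ∀ e₁ e₂ e₃ : E, jacobiator brk e₁ e₂ e₃ = 0) :
    ∀ e₁ e₂ : E, ρ (brk e₁ e₂) = ⁅ρ e₁, ρ e₂⁆ := by
  intro e₁ e₂
  ext f
  refine sub_eq_zero.mp (faithful _ fun e₃ => ?_)
  have h := jacobiator_smul_right alt leibniz f e₁ e₂ e₃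
  rwa [jacobi, jacobi, smul_zero, zero_add, eq_comm] at h

/-- For an anchored skew bracket `([·,·], ρ)` on a faithful `R`-module `E`
whose bracket satisfies the Jacobi identity (vanishing Jacobiator), the anchor is a
homomorphism of brackets: `ρ([e₁,e₂]) = [ρ(e₁), ρ(e₂)]` as derivations of `R`;
i.e. axiom (A0) of a Lie algebroid follows from (A1) and the Jacobi identity. -/
theorem anchor_bracket_hom_of_jacobi
    {K R E : Type*} [CommRing K] [CommRing R] [Algebra K R]
    [AddCommGroup E] [Module K E] [Module R E] [IsScalarTower K R E]
    (faithful : ∀ f : R, (∀ e : E, f • e = 0) → f = 0)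
    (brk : E →ₗ[K] E →ₗ[K] E)
    (alt : ∀ e : E, brk e e = 0)
    (ρ : E →ₗ[R] Derivation K R R)
    (leibniz : ∀ (f : R) (e₁ e₂ : E),
      brk e₁ (f • e₂) = f • brk e₁ e₂ + (ρ e₁ f) • e₂)
    (jacobi : ∀ e₁ e₂ e₃ : E, jacobiator brk e₁ e₂ e₃ = 0) :
    ∀ e₁ e₂ : E, ρ (brk e₁ e₂) = ⁅ρ e₁, ρ e₂⁆ :=
  anchor_bracket_hom_of_jacobi_general faithful brk alt ρ leibniz jacobi
end
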